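/- arXiv:2110.02303 — 6 statements merged into one kernel-verified Lean document; each statement's English description precedes it below -/
import Mathlib

section
/- Every pseudobounded, locally precompact paratopological SIN-group is precompact. More precisely, if G is a paratopological group with a base of invariant neighborhoods at the identity, G is pseudobounded, and G has a precompact neighborhood U of the identity, then G is precompact (for every neighborhood W of the identity there is a finite set F ⊆ G with FW ⊇ G). -/
open scoped Pointwise

/-- Every pseudobounded locally precompact paratopological SIN-group
is precompact. -/
theorem pseudobounded_locallyPrecompact_SIN_precompact
    {G : Type*} [Group G] [TopologicalSpace G] [ContinuousMul G]
    -- SIN: a base of invariant neighborhoods at the identity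
    (hSIN : ∀ U ∈ nhds (1 : G), ∃ V ∈ nhds (1 : G), V ⊆ U ∧
      ∀ g : G, (fun x => g⁻¹ * x * g) '' V = V)
    -- pseudobounded
    (hpb : ∀ U ∈ nhds (1 : G), ∃ n : ℕ, 0 < n ∧ U ^ n = Set.univ)
    -- locally precompact: some neighborhood of 1 is (left) precompact
    (hlpc : ∃ U ∈ nhds (1 : G), ∀ W ∈ nhds (1 : G),
      ∃ F : Set G, F.Finite ∧ U ⊆ F * W) :
    ∀ W ∈ nhds (1 : G), ∃ F : Set G, F.Finite ∧ (Set.univ : Set G) ⊆ F * W := by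
  obtain ⟨U, hU, hUpc⟩ := hlpc
  -- precompact sets are closed under multiplication
  have key : ∀ A B : Set G,
      (∀ W ∈ nhds (1 : G), ∃ F : Set G, F.Finite ∧ A ⊆ F * W) →
      (∀ W ∈ nhds (1 : G), ∃ F : Set G, F.Finite ∧ B ⊆ F * W) →
      (∀ W ∈ nhds (1 : G), ∃ F : Set G, F.Finite ∧ A * B ⊆ F * W) := by
    intro A B hA hB W hW
    obtain ⟨V, hV, hVW, _⟩ := hSIN W hW
    obtain ⟨V₂, hV₂, hsplit⟩ := exists_nhds_one_split hV
    obtain ⟨V₃, hV₃, hV₃sub, hV₃inv⟩ := hSIN V₂ hV₂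
    obtain ⟨F₁, hF₁fin, hF₁⟩ := hA V₃ hV₃
    obtain ⟨F₂, hF₂fin, hF₂⟩ := hB V₃ hV₃
    refine ⟨F₁ * F₂, hF₁fin.mul hF₂fin, ?_⟩
    rintro x ⟨a, ha, b, hb, rfl⟩
    obtain ⟨f₁, hf₁, v₁, hv₁, rfl⟩ := hF₁ ha
    obtain ⟨f₂, hf₂, v₂, hv₂, rfl⟩ := hF₂ hb
    -- move v₁ past f₂ using invariance of V₃
    have hv₁' : f₂⁻¹ * v₁ * f₂ ∈ V₃ := by
      rw [← hV₃inv f₂]; exact ⟨v₁, hv₁, rfl⟩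
    have hprod : (f₂⁻¹ * v₁ * f₂) * v₂ ∈ V :=
      hsplit _ (hV₃sub hv₁') _ (hV₃sub hv₂)
    refine ⟨f₁ * f₂, ⟨f₁, hf₁, f₂, hf₂, rfl⟩, (f₂⁻¹ * v₁ * f₂) * v₂, hVW hprod, ?_⟩
    group
  -- U^n is precompact for all n ≥ 1
  have pow : ∀ n : ℕ, ∀ W ∈ nhds (1 : G), ∃ F : Set G, F.Finite ∧ U ^ (n + 1) ⊆ F * W := by
    intro n
    induction n with
    | zero => simpa using hUpc
    | succ k ih =>
        have := key (U ^ (k + 1)) U ih hUpc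
        simpa [pow_succ] using this
  intro W hW
  obtain ⟨n, hn, hUn⟩ := hpb U hU
  obtain ⟨m, rfl⟩ := Nat.exists_eq_add_of_lt hn
  obtain ⟨F, hFfin, hF⟩ := pow m W hW
  rw [Nat.zero_add] at hUn
  exact ⟨F, hFfin, hUn ▸ hF⟩
end

section
/- If G is a pseudobounded paratopological SIN-group and U is a precompact neighborhood of the identity with Uⁿ = G, and V is an invariant neighborhood of the identity with Vⁿ ⊆ U and F is finite with U ⊆ FV, then G = FⁿU. In particular G is covered by finitely many left translates of U. -/
open scoped Pointwise

/-- If `G` is a pseudobounded paratopological SIN-group, `U` is a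
precompact neighborhood of the identity with `U ^ n = G`, `V` an invariant
neighborhood of the identity with `V ^ n ⊆ U`, and `F` a finite set with
`U ⊆ F * V`, then `G = F ^ n * U`. -/
theorem covered_by_translates
    {G : Type*} [Group G] [TopologicalSpace G] [ContinuousMul G]
    (hSIN : ∀ W ∈ nhds (1 : G), ∃ V ∈ nhds (1 : G), V ⊆ W ∧
      ∀ g : G, (fun x => g⁻¹ * x * g) '' V = V)
    (hpb : ∀ W ∈ nhds (1 : G), ∃ m : ℕ, 0 < m ∧ W ^ m = Set.univ)
    (U V F : Set G) (n : ℕ) (hn : 0 < n)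
    (hU : U ∈ nhds (1 : G))
    (hUpre : ∀ W ∈ nhds (1 : G), ∃ E : Set G, E.Finite ∧ U ⊆ E * W)
    (hUn : U ^ n = Set.univ)
    (hV : V ∈ nhds (1 : G))
    (hVinv : ∀ g : G, (fun x => g⁻¹ * x * g) '' V = V)
    (hVn : V ^ n ⊆ U)
    (hF : F.Finite) (hUFV : U ⊆ F * V) :
    (Set.univ : Set G) = F ^ n * U := by
  -- V commutes with every set, by invariance
  have hswap : ∀ A : Set G, A * V = V * A := by
    intro A
    ext x
    constructor
    · rintro ⟨a, ha, v, hv, rfl⟩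
      refine ⟨a * v * a⁻¹, ?_, a, ha, by group⟩
      rw [← hVinv a⁻¹]
      exact ⟨v, hv, by group⟩
    · rintro ⟨v, hv, a, ha, rfl⟩
      refine ⟨a, ha, a⁻¹ * v * a, ?_, by group⟩
      rw [← hVinv a]
      exact ⟨v, hv, rfl⟩
  have hswapPow : ∀ (k : ℕ) (A : Set G), A * V ^ k = V ^ k * A := by
    intro k
    induction k with
    | zero => intro A; simp
    | succ k ih =>
        intro A
        rw [pow_succ, ← mul_assoc, ih A, mul_assoc, hswap A, ← mul_assoc,
          ← ih V, mul_assoc]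
  have key : ∀ k : ℕ, (F * V) ^ k = F ^ k * V ^ k := by
    intro k
    induction k with
    | zero => simp
    | succ k ih =>
        rw [pow_succ, ih, pow_succ, pow_succ, mul_assoc, ← mul_assoc (V ^ k),
          ← hswapPow k F, mul_assoc, mul_assoc]
  have h1 : (Set.univ : Set G) ⊆ F ^ n * U := by
    calc (Set.univ : Set G) = U ^ n := hUn.symm
      _ ⊆ (F * V) ^ n := Set.pow_subset_pow_left hUFV
      _ = F ^ n * V ^ n := key n
      _ ⊆ F ^ n * U := Set.mul_subset_mul_left hVn
  exact h1.antisymm (Set.subset_univ _)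
end

section
/- Every ω-pseudobounded feebly compact Baire left topological group is pseudobounded. -/
open scoped Pointwise

section Aux

variable {G : Type*} [Group G] [TopologicalSpace G]

private lemma aux_smul_open (hleft : ∀ g : G, Continuous fun x : G => g * x)
    (g : G) {S : Set G} (hS : IsOpen S) : IsOpen (g • S) := by
  have h : g • S = (fun x : G => g⁻¹ * x) ⁻¹' S := by
    ext x
    simp [Set.mem_smul_set_iff_inv_smul_mem, smul_eq_mul]
  rw [h]
  exact hS.preimage (hleft g⁻¹)

private lemma aux_mul_open (hleft : ∀ g : G, Continuous fun x : G => g * x)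
    (S : Set G) {U : Set G} (hU : IsOpen U) : IsOpen (S * U) := by
  have h : S * U = ⋃ s ∈ S, s • U := by
    ext x
    simp only [Set.mem_mul, Set.mem_iUnion, Set.mem_smul_set, smul_eq_mul]
    tauto
  rw [h]
  exact isOpen_biUnion fun s _ => aux_smul_open hleft s hU

private lemma aux_pow_open (hleft : ∀ g : G, Continuous fun x : G => g * x)
    {U : Set G} (hU : IsOpen U) (n : ℕ) : IsOpen (U ^ (n + 1)) := by
  rw [pow_succ]
  exact aux_mul_open hleft _ hU

set_option linter.unusedSectionVars false in
private lemma aux_pow_mono_set {S T : Set G} (h : S ⊆ T) : ∀ k : ℕ, S ^ k ⊆ T ^ k := by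
  intro k
  induction k with
  | zero => simp
  | succ k ih =>
    rw [pow_succ, pow_succ]
    exact Set.mul_subset_mul ih h

set_option linter.unusedSectionVars false in
private lemma aux_pow_le {U : Set G} (h1 : (1 : G) ∈ U) :
    ∀ m n : ℕ, m ≤ n → U ^ (m + 1) ⊆ U ^ (n + 1) := by
  suffices h : ∀ m k : ℕ, U ^ (m + 1) ⊆ U ^ (m + 1 + k) by
    intro m n hmn
    have := h m (n - m)
    rwa [show m + 1 + (n - m) = n + 1 by omega] at this
  intro m k
  induction k with
  | zero => simp
  | succ k ih =>
    rw [show m + 1 + (k + 1) = (m + 1 + k) + 1 by ring, pow_succ]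
    exact fun x hx => ⟨x, ih hx, 1, h1, mul_one x⟩

end Aux

/-- Every ω-pseudobounded feebly compact Baire left topological group
is pseudobounded. -/
theorem omegaPseudobounded_feeblyCompact_baire_pseudobounded
    {G : Type*} [Group G] [TopologicalSpace G] [BaireSpace G]
    -- left topological group: left translations are continuous
    (hleft : ∀ g : G, Continuous fun x : G => g * x)
    -- feebly compact: every locally finite family of nonempty open sets is finite
    (hfc : ∀ (ι : Type) (f : ι → Set G), (∀ i, IsOpen (f i)) →
      (∀ i, (f i).Nonempty) → LocallyFinite f → Finite ι)
    -- ω-pseudobounded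
    (hωpb : ∀ U ∈ nhds (1 : G), (⋃ n : ℕ, U ^ (n + 1)) = Set.univ) :
    -- pseudobounded
    ∀ U ∈ nhds (1 : G), ∃ n : ℕ, 0 < n ∧ U ^ n = Set.univ := by
  -- the feebly compact consequence we need: decreasing nonempty open sets have
  -- a point common to all closures
  have hfc' : ∀ (W : ℕ → Set G), (∀ n, IsOpen (W n)) → (∀ n, (W n).Nonempty) →
      (∀ m n : ℕ, m ≤ n → W n ⊆ W m) → (⋂ n, closure (W n)).Nonempty := by
    intro W ho hne hmono
    by_contra hempty
    rw [Set.not_nonempty_iff_eq_empty] at hempty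
    have hlf : LocallyFinite W := by
      intro x
      have hx : ∃ n, x ∉ closure (W n) := by
        by_contra hc
        push_neg at hc
        have : x ∈ ⋂ n, closure (W n) := Set.mem_iInter.mpr hc
        rw [hempty] at this
        exact this
      obtain ⟨n, hn⟩ := hx
      refine ⟨(closure (W n))ᶜ, isClosed_closure.isOpen_compl.mem_nhds hn, ?_⟩
      apply Set.Finite.subset (Set.finite_Iio n)
      intro i hi
      simp only [Set.mem_setOf_eq] at hi
      by_contra hni
      simp only [Set.mem_Iio, not_lt] at hni
      obtain ⟨y, hy1, hy2⟩ := hi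
      exact hy2 (subset_closure (hmono n i hni hy1))
    haveI := hfc ℕ W ho hne hlf
    exact not_finite ℕ
  intro U hU
  obtain ⟨V, hVU, hVopen, hV1⟩ := mem_nhds_iff.mp hU
  have hVnhds : V ∈ nhds (1 : G) := hVopen.mem_nhds hV1
  -- Step 1: some power of V is dense
  have hdense : ∃ N : ℕ, Dense (V ^ (N + 1)) := by
    by_contra h
    push_neg at h
    set W : ℕ → Set G := fun n => (closure (V ^ (n + 1)))ᶜ with hW
    have hWo : ∀ n, IsOpen (W n) := fun n => isClosed_closure.isOpen_compl
    have hWne : ∀ n, (W n).Nonempty := by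
      intro n
      rw [hW]
      rw [Set.nonempty_compl]
      intro hcl
      exact h n (dense_iff_closure_eq.mpr hcl)
    have hWmono : ∀ m n : ℕ, m ≤ n → W n ⊆ W m := by
      intro m n hmn
      exact Set.compl_subset_compl.mpr (closure_mono (aux_pow_le hV1 m n hmn))
    obtain ⟨x, hx⟩ := hfc' W hWo hWne hWmono
    have hxn : ∀ n, x ∉ V ^ (n + 1) := by
      intro n hxV
      have h1 : x ∈ closure (W n) := Set.mem_iInter.mp hx n
      have h2 : closure (W n) ⊆ (V ^ (n + 1))ᶜ := by
        rw [hW]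
        simp only []
        rw [closure_compl]
        intro y hy
        exact fun hyV => hy (interior_mono subset_closure
          (by rwa [(aux_pow_open hleft hVopen n).interior_eq]))
      exact h2 h1 hxV
    have : x ∈ ⋃ n : ℕ, V ^ (n + 1) := by rw [hωpb V hVnhds]; trivial
    obtain ⟨n, hn⟩ := Set.mem_iUnion.mp this
    exact hxn n hn
  obtain ⟨N, hD⟩ := hdense
  -- Step 2: Baire gives n with closure ((V^(n+1))⁻¹) having nonempty interior
  have hcover : (⋃ n : ℕ, closure ((V ^ (n + 1))⁻¹)) = Set.univ := by
    apply Set.eq_univ_of_forall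
    intro g
    have : g⁻¹ ∈ ⋃ n : ℕ, V ^ (n + 1) := by rw [hωpb V hVnhds]; trivial
    obtain ⟨n, hn⟩ := Set.mem_iUnion.mp this
    exact Set.mem_iUnion.mpr ⟨n, subset_closure (Set.mem_inv.mpr hn)⟩
  obtain ⟨n, hni⟩ := nonempty_interior_of_iUnion_of_closed
    (fun n : ℕ => isClosed_closure) hcover
  set W : Set G := interior (closure ((V ^ (n + 1))⁻¹)) with hWdef
  have hWopen : IsOpen W := isOpen_interior
  -- Final step
  refine ⟨(N + 1) + (n + 1), by omega, ?_⟩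
  apply Set.eq_univ_of_forall
  intro g
  apply aux_pow_mono_set hVU
  -- find v ∈ W with g * v ∈ V^(N+1) and v⁻¹ ∈ V^(n+1)
  have hAopen : IsOpen (W ∩ g⁻¹ • V ^ (N + 1)) :=
    hWopen.inter (aux_smul_open hleft g⁻¹ (aux_pow_open hleft hVopen N))
  have hAne : (W ∩ g⁻¹ • V ^ (N + 1)).Nonempty := by
    have hgW : IsOpen (g • W) := aux_smul_open hleft g hWopen
    have hgWne : (g • W).Nonempty := hni.smul_set
    obtain ⟨y, hy1, hy2⟩ := hD.inter_open_nonempty (g • W) hgW hgWne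
    obtain ⟨w, hw, rfl⟩ := hy1
    refine ⟨w, hw, ?_⟩
    rw [Set.mem_smul_set_iff_inv_smul_mem]
    simpa [smul_eq_mul] using hy2
  obtain ⟨a, haW, haV⟩ := hAne
  have hacl : a ∈ closure ((V ^ (n + 1))⁻¹) := interior_subset haW
  obtain ⟨v, ⟨hvW, hvV⟩, hvinv⟩ :=
    mem_closure_iff.mp hacl _ hAopen ⟨haW, haV⟩
  -- now g = (g * v) * v⁻¹
  have hgv : g * v ∈ V ^ (N + 1) := by
    rw [Set.mem_smul_set_iff_inv_smul_mem] at hvV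
    simpa [smul_eq_mul] using hvV
  have hvinv' : v⁻¹ ∈ V ^ (n + 1) := Set.mem_inv.mp hvinv
  rw [pow_add]
  exact ⟨g * v, hgv, v⁻¹, hvinv', by group⟩
end

section
/- The group 𝕋^ω with the sup-metric topology is not locally ω-precompact: no neighborhood of the identity can be covered by countably many left translates of the ε-ball around the identity, for small ε. -/
open scoped Pointwise

private lemma circle_dist_le_two (z w : Circle) : dist z w ≤ 2 := by
  rw [show dist z w = dist (z:ℂ) w from rfl, dist_eq_norm]
  calc ‖(z:ℂ) - w‖ ≤ ‖(z:ℂ)‖ + ‖(w:ℂ)‖ := norm_sub_le _ _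
  _ = 2 := by
    rw [Circle.norm_coe, Circle.norm_coe]; norm_num

private lemma circle_dist_mul_left (a b c : Circle) : dist (a * b) (a * c) = dist b c := by
  rw [show dist (a * b) (a * c) = dist ((a * b : Circle) : ℂ) ((a * c : Circle) : ℂ) from rfl,
    show dist b c = dist (b : ℂ) (c : ℂ) from rfl, dist_eq_norm, dist_eq_norm, Circle.coe_mul,
    Circle.coe_mul, ← mul_sub, norm_mul, Circle.norm_coe, one_mul]

private lemma setNat_uncountable : ¬ Countable (Set ℕ) := by
  intro h
  obtain ⟨f, hf⟩ := Countable.exists_injective_nat (Set ℕ)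
  exact Function.cantor_injective f hf

/-- The group `𝕋^ω` with the sup-metric topology is not locally
ω-precompact: no neighborhood of the identity is left ω-precompact, i.e. no
neighborhood of the identity can be covered by countably many left translates
of every neighborhood of the identity. -/
theorem circle_power_supMetric_not_locally_omegaPrecompact
    (t : TopologicalSpace (ℕ → Circle))
    (hbasis : ∀ x : ℕ → Circle, (@nhds _ t x).HasBasis (fun ε : ℝ => 0 < ε)
      (fun ε => {y : ℕ → Circle | ⨆ i, dist (x i) (y i) < ε})) :
    ¬ ∃ U ∈ @nhds _ t (1 : ℕ → Circle), ∀ V ∈ @nhds _ t (1 : ℕ → Circle),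
      ∃ F : Set (ℕ → Circle), F.Countable ∧ U ⊆ F * V := by
  classical
  rintro ⟨U, hU, hP⟩
  obtain ⟨ε, hε, hball⟩ := (hbasis 1).mem_iff.mp hU
  -- choose a small θ with exp θ ≠ 1 and dist 1 (exp θ) < ε
  have hcont : ContinuousAt Circle.exp 0 := Circle.exp.continuous.continuousAt
  obtain ⟨δ, hδ, hδε⟩ := Metric.continuousAt_iff.mp hcont ε hε
  set θ : ℝ := min (δ / 2) Real.pi with hθdef
  have hθpos : 0 < θ := lt_min (by linarith) Real.pi_pos
  have hθπ : θ ≤ Real.pi := min_le_right _ _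
  have hθδ : dist θ 0 < δ := by
    rw [Real.dist_eq, sub_zero, abs_of_pos hθpos]
    exact lt_of_le_of_lt (min_le_left _ _) (by linarith)
  have hlt : dist (Circle.exp θ) 1 < ε := by
    have := hδε hθδ
    rwa [Circle.exp_zero] at this
  have hne : Circle.exp θ ≠ 1 := by
    intro h
    obtain ⟨n, hn⟩ := Circle.exp_eq_one.mp h
    have hπ := Real.pi_pos
    have hn1 : (1 : ℤ) ≤ n := by
      by_contra hn1
      push_neg at hn1
      have : (n : ℝ) ≤ 0 := by exact_mod_cast Int.lt_add_one_iff.mp hn1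
      nlinarith
    have : (1 : ℝ) ≤ (n : ℝ) := by exact_mod_cast hn1
    nlinarith
  set c : ℝ := dist (1 : Circle) (Circle.exp θ) with hcdef
  have hc0 : 0 < c := dist_pos.mpr fun h => hne h.symm
  have hcε : c < ε := by rwa [hcdef, dist_comm]
  -- the test neighborhood V
  obtain ⟨F, hFc, hFV⟩ := hP {y : ℕ → Circle | ⨆ i, dist ((1 : ℕ → Circle) i) (y i) < c / 2}
    ((hbasis 1).mem_of_mem (by positivity))
  -- the uncountable family
  set x : Set ℕ → (ℕ → Circle) := fun r i => Circle.exp (if i ∈ r then θ else 0) with hxdef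
  have hxU : ∀ r, x r ∈ U := by
    intro r
    apply hball
    have hle : ∀ i, dist ((1 : ℕ → Circle) i) (x r i) ≤ c := by
      intro i
      by_cases h : i ∈ r
      · simp only [hxdef, if_pos h, Pi.one_apply]; exact le_of_eq rfl
      · simp only [hxdef, if_neg h, Pi.one_apply, Circle.exp_zero, dist_self]
        exact le_of_lt hc0
    exact lt_of_le_of_lt (ciSup_le hle) hcε
  -- each x r lies in some translate
  have hchoice : ∀ r, ∃ f ∈ F, ∃ v, (⨆ i, dist ((1 : ℕ → Circle) i) (v i) < c / 2) ∧
      x r = f * v := by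
    intro r
    obtain ⟨f, hf, v, hv, hfv⟩ := hFV (hxU r)
    exact ⟨f, hf, v, hv, hfv.symm⟩
  choose f hfF v hv hfv using hchoice
  -- the chosen translators give an injection into the countable F
  have hFcount : Countable F := hFc.to_subtype
  have hninj : ¬ Function.Injective (fun r : Set ℕ => (⟨f r, hfF r⟩ : F)) := by
    intro hinj
    exact setNat_uncountable (Function.Injective.countable hinj)
  rw [Function.not_injective_iff] at hninj
  obtain ⟨r, s, hfrs, hrs⟩ := hninj
  have hfrs' : f r = f s := congrArg Subtype.val hfrs
  -- a coordinate where r and s differ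
  have : ∃ i, ¬ (i ∈ r ↔ i ∈ s) := by
    by_contra h
    push_neg at h
    exact hrs (Set.ext h)
  obtain ⟨i, hi⟩ := this
  -- bound on each coordinate of elements of V
  have hbdd : ∀ (w : ℕ → Circle), (⨆ j, dist ((1 : ℕ → Circle) j) (w j) < c / 2) →
      ∀ j, dist (1 : Circle) (w j) < c / 2 := by
    intro w hw j
    refine lt_of_le_of_lt ?_ hw
    exact le_ciSup (f := fun j => dist ((1 : ℕ → Circle) j) (w j))
      ⟨2, by rintro _ ⟨j, rfl⟩; exact circle_dist_le_two _ _⟩ j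
  have h1 : dist (x r i) (x s i) < c := by
    have e1 : x r i = f r i * v r i := by rw [hfv r]; rfl
    have e2 : x s i = f r i * v s i := by rw [hfv s, ← hfrs']; rfl
    rw [e1, e2, circle_dist_mul_left]
    calc dist (v r i) (v s i) ≤ dist (v r i) 1 + dist 1 (v s i) := dist_triangle _ _ _
    _ < c / 2 + c / 2 := by
        have h1 := hbdd (v r) (hv r) i
        have h2 := hbdd (v s) (hv s) i
        rw [dist_comm] at h1
        exact add_lt_add h1 h2
    _ = c := by ring
  have h2 : dist (x r i) (x s i) = c := by
    simp only [hxdef]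
    by_cases h : i ∈ r
    · have h' : i ∉ s := fun hs => hi ⟨fun _ => hs, fun _ => h⟩
      rw [if_pos h, if_neg h', Circle.exp_zero, dist_comm]
    · have h' : i ∈ s := by
        by_contra h''
        exact hi ⟨fun hr => absurd hr h, fun hs => absurd hs h''⟩
      rw [if_pos h', if_neg h, Circle.exp_zero]
  rw [h2] at h1
  exact lt_irrefl _ h1
end

section
/- A nonseparable real normed space, regarded as an additive topological group, is ω-pseudobounded but not ω-precompact. -/
open scoped Pointwise

/-- A nonseparable real normed space, as an additive topological
group, is ω-pseudobounded but not left ω-precompact. -/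
theorem nonseparable_normed_omegaPseudobounded_not_omegaPrecompact
    {E : Type*} [NormedAddCommGroup E] [NormedSpace ℝ E]
    (hns : ¬ TopologicalSpace.SeparableSpace E) :
    (∀ U ∈ nhds (0 : E), ∀ x : E, ∃ n : ℕ, 0 < n ∧
        ∃ f : Fin n → E, (∀ i, f i ∈ U) ∧ x = ∑ i, f i) ∧
      ¬ ∀ U ∈ nhds (0 : E), ∃ F : Set E, F.Countable ∧
        (Set.univ : Set E) ⊆ F + U := by
  constructor
  · intro U hU x
    have htend : Filter.Tendsto (fun n : ℕ => ((n : ℝ))⁻¹ • x) Filter.atTop (nhds 0) := by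
      have h0 : Filter.Tendsto (fun n : ℕ => ((n : ℝ))⁻¹) Filter.atTop (nhds 0) :=
        tendsto_inv_atTop_nhds_zero_nat
      simpa using h0.smul_const x
    have := (htend.eventually_mem hU).and (Filter.eventually_ge_atTop 1)
    obtain ⟨n, hmem, hn1⟩ := this.exists
    refine ⟨n, hn1, fun _ => ((n : ℝ))⁻¹ • x, fun _ => hmem, ?_⟩
    have hn0 : (n : ℝ) ≠ 0 := by positivity
    rw [Finset.sum_const, Finset.card_univ, Fintype.card_fin]
    rw [← Nat.cast_smul_eq_nsmul ℝ, smul_smul, mul_inv_cancel₀ hn0, one_smul]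
  · intro h
    apply hns
    choose F hFc hFcov using fun k : ℕ =>
      h (Metric.ball (0 : E) (1 / (k + 1))) (Metric.ball_mem_nhds 0 (by positivity))
    refine ⟨⟨⋃ k, F k, Set.countable_iUnion hFc, ?_⟩⟩
    rw [Metric.dense_iff]
    intro x r hr
    obtain ⟨k, hk⟩ := exists_nat_one_div_lt hr
    have hx := hFcov k (Set.mem_univ x)
    rw [Set.mem_add] at hx
    obtain ⟨f, hf, b, hb, hfb⟩ := hx
    refine ⟨f, ?_, Set.mem_iUnion.2 ⟨k, hf⟩⟩
    rw [Metric.mem_ball]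
    have : dist x f = ‖b‖ := by
      rw [dist_eq_norm, ← hfb]; simp
    rw [dist_comm, this]
    calc ‖b‖ < 1 / (k + 1) := by simpa using Metric.mem_ball.1 hb
      _ < r := hk
end

section
/- Let H be a meagerly divisible Abelian semitopological group with cov(M_H) = cof(M_H) = κ > ω. Then H contains a free Abelian subgroup G of size κ such that every subset M ⊆ G that is meager in H has cardinality less than κ; in particular no meager subset of H contained in G generates G, so G is a premeager group. -/
open Cardinal

/-- The covering number of the meager ideal of a topological space. -/
noncomputable def covMeagre (H : Type*) [TopologicalSpace H] : Cardinal :=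
  sInf {c : Cardinal | ∃ 𝒜 : Set (Set H), (∀ A ∈ 𝒜, IsMeagre A) ∧
    ⋃₀ 𝒜 = Set.univ ∧ #𝒜 = c}

/-- The cofinality of the meager ideal of a topological space. -/
noncomputable def cofMeagre (H : Type*) [TopologicalSpace H] : Cardinal :=
  sInf {c : Cardinal | ∃ 𝒜 : Set (Set H), (∀ A ∈ 𝒜, IsMeagre A) ∧
    (∀ B : Set H, IsMeagre B → ∃ A ∈ 𝒜, B ⊆ A) ∧ #𝒜 = c}

universe u

section Aux
variable {H : Type u} [AddCommGroup H] [TopologicalSpace H]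

theorem isMeagre_preimage_addRight' (hsep' : ∀ a : H, Continuous fun x : H => x + a)
    {T : Set H} (hT : IsMeagre T) (g : H) : IsMeagre ((· + g) ⁻¹' T) := by
  let e : H ≃ₜ H :=
    { toFun := fun x => x + g
      invFun := fun x => x + (-g)
      left_inv := fun x => by simp [add_assoc]
      right_inv := fun x => by simp [add_assoc]
      continuous_toFun := hsep' g
      continuous_invFun := hsep' (-g) }
  have h := e.residual_map_eq
  have hT' : Tᶜ ∈ (residual H).map e := by rw [h]; exact hT
  exact Filter.mem_map.mp hT'

theorem isMeagre_smul_add' (hsep' : ∀ a : H, Continuous fun x : H => x + a)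
    (hmd : ∀ M : Set H, IsMeagre M → ∀ n : ℤ, n ≠ 0 → IsMeagre {x : H | n • x ∈ M})
    {T : Set H} (hT : IsMeagre T) {n : ℤ} (hn : n ≠ 0) (g : H) :
    IsMeagre {x : H | n • x + g ∈ T} :=
  hmd _ (isMeagre_preimage_addRight' hsep' hT g) n hn

omit [TopologicalSpace H] in
theorem mk_addSubgroup_closure_le' (s : Set H) :
    #(AddSubgroup.closure s) ≤ max #s ℵ₀ := by
  classical
  set s' : Set H := s ∪ (-s) with hs'
  have hsub : (AddSubgroup.closure s : Set H) ⊆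
      Set.range (fun l : List s' => (l.map Subtype.val).sum) := by
    intro g hg
    have hg' : g ∈ AddSubmonoid.closure (s ∪ -s) := by
      rw [← AddSubgroup.closure_toAddSubmonoid] at *
      exact hg
    obtain ⟨l, hl, hsum⟩ := AddSubmonoid.exists_list_of_mem_closure hg'
    refine ⟨l.attach.map (fun y => ⟨y.1, hl y.1 y.2⟩), ?_⟩
    simp only [List.map_map, Function.comp_def]
    simpa using hsum
  have h1 : #(AddSubgroup.closure s) ≤ #(List s') :=
    (Cardinal.mk_le_mk_of_subset hsub).trans Cardinal.mk_range_le
  have h2 : #s' ≤ #s + #s := by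
    refine (Cardinal.mk_union_le _ _).trans ?_
    gcongr
    have : (-s : Set H) = Neg.neg ⁻¹' s := rfl
    rw [this]
    exact Cardinal.mk_preimage_of_injective _ _ neg_injective
  refine (h1.trans (Cardinal.mk_list_le_max _)).trans ?_
  rcases le_or_gt ℵ₀ #s with hs | hs
  · have : #s + #s ≤ #s := by rw [Cardinal.add_eq_self hs]
    exact max_le (le_max_right _ _) ((h2.trans this).trans (le_max_left _ _))
  · have : #s' < ℵ₀ := h2.trans_lt (Cardinal.add_lt_aleph0 hs hs)
    exact max_le (le_max_right _ _) (this.le.trans (le_max_right _ _))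

omit [TopologicalSpace H] in
theorem mem_addClosure_insert' {a : H} {s : Set H} {g : H}
    (hg : g ∈ AddSubgroup.closure (insert a s)) :
    ∃ n : ℤ, ∃ h ∈ AddSubgroup.closure s, g = n • a + h := by
  rw [Set.insert_eq, AddSubgroup.closure_union, AddSubgroup.mem_sup] at hg
  obtain ⟨y, hy, z, hz, hyz⟩ := hg
  rw [AddSubgroup.mem_closure_singleton] at hy
  obtain ⟨n, rfl⟩ := hy
  exact ⟨n, z, hz, hyz.symm⟩

omit [AddCommGroup H] in
theorem not_cover' {κ : Cardinal.{u}} (hcov : covMeagre H = κ) {ι' : Type u} (hι' : #ι' < κ)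
    (f : ι' → Set H) (hf : ∀ i, IsMeagre (f i)) : ∃ y : H, ∀ i, y ∉ f i := by
  by_contra hc
  push_neg at hc
  have hcover : ⋃₀ (Set.range f) = Set.univ := by
    ext y
    simp only [Set.mem_sUnion, Set.mem_range, Set.mem_univ, iff_true]
    obtain ⟨i, hi⟩ := hc y
    exact ⟨f i, ⟨i, rfl⟩, hi⟩
  have hle : covMeagre H ≤ #(Set.range f) :=
    csInf_le' ⟨Set.range f, by rintro A ⟨i, rfl⟩; exact hf i, hcover, rfl⟩
  rw [hcov] at hle
  exact absurd (hle.trans_lt (Cardinal.mk_range_le.trans_lt hι')) (lt_irrefl κ)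

theorem exists_wf_seq' {ι : Type*} [LinearOrder ι] [WellFoundedLT ι] {A : Type*}
    (Q : (α : ι) → ((β : ι) → β < α → A) → A → Prop)
    (key : ∀ α prev, ∃ y, Q α prev y) :
    ∃ x : ι → A, ∀ α, Q α (fun β _ => x β) (x α) := by
  refine ⟨(wellFounded_lt).fix (fun α ih => Classical.choose (key α ih)), fun α => ?_⟩
  have h := WellFounded.fix_eq (wellFounded_lt)
    (fun α (ih : ∀ β, β < α → A) => Classical.choose (key α ih)) α
  rw [h]
  exact Classical.choose_spec _

end Aux

/-- If `H` is a meagerly divisible Abelian semitopological group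
with `cov(M_H) = cof(M_H) = κ > ω`, then `H` contains a free Abelian subgroup `G`
of size `κ` such that every subset of `G` meager in `H` has size `< κ`; in
particular no meager subset of `H` contained in `G` generates `G`. -/
theorem premeager_subgroup_of_meagerlyDivisible
    {H : Type*} [AddCommGroup H] [TopologicalSpace H]
    -- semitopological group: separately continuous addition
    (hsep : ∀ a : H, Continuous fun x : H => a + x)
    (hsep' : ∀ a : H, Continuous fun x : H => x + a)
    -- meagerly divisible
    (hmd : ∀ M : Set H, IsMeagre M → ∀ n : ℤ, n ≠ 0 →
      IsMeagre {x : H | n • x ∈ M})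
    (κ : Cardinal)
    (hcov : covMeagre H = κ) (hcof : cofMeagre H = κ) (hκ : Cardinal.aleph0 < κ) :
    ∃ G : AddSubgroup H, #G = κ ∧
      (∃ B : Set H, B ⊆ (G : Set H) ∧ AddSubgroup.closure B = G ∧ #B = κ ∧
        ∀ F : Finset H, (F : Set H) ⊆ B → ∀ f : H → ℤ,
          ∑ x ∈ F, f x • x = 0 → ∀ x ∈ F, f x = 0) ∧
      (∀ M : Set H, M ⊆ (G : Set H) → IsMeagre M → #M < κ) ∧
      (∀ M : Set H, M ⊆ (G : Set H) → IsMeagre M → AddSubgroup.closure M ≠ G) := by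
  classical
  -- a meager set containing 0
  have hScovne : {c : Cardinal | ∃ 𝒜 : Set (Set H), (∀ A ∈ 𝒜, IsMeagre A) ∧
      ⋃₀ 𝒜 = Set.univ ∧ #𝒜 = c}.Nonempty := by
    by_contra h
    rw [Set.not_nonempty_iff_eq_empty] at h
    rw [covMeagre, h, Cardinal.sInf_empty] at hcov
    exact absurd (hcov ▸ hκ) (by simp)
  have hκcov : κ ∈ {c : Cardinal | ∃ 𝒜 : Set (Set H), (∀ A ∈ 𝒜, IsMeagre A) ∧
      ⋃₀ 𝒜 = Set.univ ∧ #𝒜 = c} := hcov ▸ csInf_mem hScovne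
  obtain ⟨𝒜c, h𝒜c_meag, h𝒜c_cover, -⟩ := hκcov
  have h0mem : (0 : H) ∈ ⋃₀ 𝒜c := by rw [h𝒜c_cover]; trivial
  obtain ⟨M₀, hM₀mem, hM₀0⟩ := h0mem
  have hM₀ : IsMeagre M₀ := h𝒜c_meag _ hM₀mem
  -- cofinal family
  have hScofne : {c : Cardinal | ∃ 𝒜 : Set (Set H), (∀ A ∈ 𝒜, IsMeagre A) ∧
      (∀ B : Set H, IsMeagre B → ∃ A ∈ 𝒜, B ⊆ A) ∧ #𝒜 = c}.Nonempty := by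
    by_contra h
    rw [Set.not_nonempty_iff_eq_empty] at h
    rw [cofMeagre, h, Cardinal.sInf_empty] at hcof
    exact absurd (hcof ▸ hκ) (by simp)
  have hκcof : κ ∈ {c : Cardinal | ∃ 𝒜 : Set (Set H), (∀ A ∈ 𝒜, IsMeagre A) ∧
      (∀ B : Set H, IsMeagre B → ∃ A ∈ 𝒜, B ⊆ A) ∧ #𝒜 = c} := hcof ▸ csInf_mem hScofne
  obtain ⟨𝒜f, h𝒜f_meag, h𝒜f_cof, h𝒜f_card⟩ := hκcof
  -- index type
  set ι := κ.ord.ToType with hιdef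
  have hι : #ι = κ := by rw [hιdef, mk_toType, card_ord]
  obtain ⟨e⟩ : Nonempty (↥𝒜f ≃ ι) := Cardinal.eq.mp (h𝒜f_card.trans hι.symm)
  set Mfn : ι → Set H := fun i => ((e.symm i : ↥𝒜f) : Set H) with hMfndef
  have hMfn_meag : ∀ i, IsMeagre (Mfn i) := fun i => h𝒜f_meag _ (e.symm i).2
  have hMfn_cof : ∀ B : Set H, IsMeagre B → ∃ i, B ⊆ Mfn i := by
    intro B hB
    obtain ⟨A, hA, hBA⟩ := h𝒜f_cof B hB
    exact ⟨e ⟨A, hA⟩, by simpa [hMfndef] using hBA⟩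
  -- the recursion
  set Q : (α : ι) → ((β : ι) → β < α → H) → H → Prop :=
    fun α prev y => ∀ n : ℤ, n ≠ 0 →
      ∀ g ∈ AddSubgroup.closure (Set.range fun b : Set.Iio α => prev b.1 b.2),
        n • y + g ∉ M₀ ∧ ∀ β : ι, β < α → n • y + g ∉ Mfn β with hQdef
  have key : ∀ α prev, ∃ y, Q α prev y := by
    intro α prev
    set s : Set H := Set.range fun b : Set.Iio α => prev b.1 b.2 with hsdef
    have hslt : #s < κ := Cardinal.mk_range_le.trans_lt (Cardinal.mk_Iio_ord_toType α)
    have hGlt : #(AddSubgroup.closure s) < κ :=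
      (mk_addSubgroup_closure_le' s).trans_lt (max_lt hslt hκ)
    set J := ℤ × ↥(AddSubgroup.closure s) × Option ↥(Set.Iio α) with hJdef
    set f : J → Set H := fun j =>
      if j.1 = 0 then ∅ else
        {x : H | j.1 • x + (j.2.1 : H) ∈ (match j.2.2 with
          | none => M₀
          | some β => Mfn β.1)} with hfdef
    have hf : ∀ j, IsMeagre (f j) := by
      rintro ⟨n, g, o⟩
      by_cases hn : n = 0
      · simp only [hfdef, hn, if_pos rfl]
        exact IsMeagre.empty
      · simp only [hfdef, if_neg hn]
        cases o with
        | none => exact isMeagre_smul_add' hsep' hmd hM₀ hn _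
        | some β => exact isMeagre_smul_add' hsep' hmd (hMfn_meag β.1) hn _
    have hJlt : #J < κ := by
      have h1 : #J = ℵ₀ * (#(AddSubgroup.closure s) * #(Option ↥(Set.Iio α))) := by
        rw [show #J = #(ℤ × ↥(AddSubgroup.closure s) × Option ↥(Set.Iio α)) from rfl]
        rw [Cardinal.mk_prod, Cardinal.mk_prod]
        simp
      rw [h1]
      refine Cardinal.mul_lt_of_lt hκ.le hκ (Cardinal.mul_lt_of_lt hκ.le hGlt ?_)
      rw [Cardinal.mk_option]
      exact Cardinal.add_lt_of_lt hκ.le (Cardinal.mk_Iio_ord_toType α)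
        (lt_trans Cardinal.one_lt_aleph0 hκ)
    obtain ⟨y, hy⟩ := not_cover' hcov hJlt f hf
    refine ⟨y, ?_⟩
    intro n hn g hg
    constructor
    · have := hy ⟨n, ⟨g, hg⟩, none⟩
      simpa [hfdef, if_neg hn] using this
    · intro β hβ
      have := hy ⟨n, ⟨g, hg⟩, some ⟨β, hβ⟩⟩
      simpa [hfdef, if_neg hn] using this
  obtain ⟨x, hx⟩ := exists_wf_seq' Q key
  have spec : ∀ (α : ι) (n : ℤ), n ≠ 0 → ∀ g ∈ AddSubgroup.closure (x '' Set.Iio α),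
      (n • x α + g ∉ M₀) ∧ ∀ β : ι, β < α → n • x α + g ∉ Mfn β := by
    intro α n hn g hg
    rw [Set.image_eq_range] at hg
    exact hx α n hn g hg
  have hne0 : ∀ (α : ι) (n : ℤ), n ≠ 0 → ∀ g ∈ AddSubgroup.closure (x '' Set.Iio α),
      n • x α + g ≠ 0 := by
    intro α n hn g hg h0
    exact (spec α n hn g hg).1 (h0 ▸ hM₀0)
  have hinj : Function.Injective x := by
    have haux : ∀ a b : ι, b < a → x a = x b → False := by
      intro a b h hab
      refine hne0 a 1 one_ne_zero (-(x b))
        (AddSubgroup.neg_mem _ (AddSubgroup.subset_closure ⟨b, h, rfl⟩)) ?_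
      rw [one_smul, hab, add_neg_cancel]
    intro a b hab
    by_contra hne
    rcases lt_or_gt_of_ne hne with h | h
    · exact haux b a h hab.symm
    · exact haux a b h hab
  -- structure lemma
  have hstruct : ∀ (F : Finset ι) (g : H), g ∈ AddSubgroup.closure (x '' ↑F) →
      ∀ i₀ : ι, g ∈ Mfn i₀ → g ∈ AddSubgroup.closure (x '' Set.Iic i₀) := by
    intro F
    induction F using Finset.strongInductionOn with
    | _ F ih =>
      intro g hg i₀ hgM
      by_cases hFle : ∀ β ∈ F, β ≤ i₀
      · refine AddSubgroup.closure_mono (Set.image_mono ?_) hg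
        intro β hβ
        exact hFle β hβ
      · push_neg at hFle
        obtain ⟨β₁, hβ₁F, hβ₁⟩ := hFle
        have hFne : F.Nonempty := ⟨β₁, hβ₁F⟩
        set α := F.max' hFne with hαdef
        have hi₀α : i₀ < α := hβ₁.trans_le (F.le_max' β₁ hβ₁F)
        have himg2 : x '' ↑F ⊆ insert (x α) (x '' ↑(F.erase α)) := by
          rintro h ⟨β, hβ, rfl⟩
          by_cases hβα : β = α
          · subst hβα; exact Set.mem_insert _ _
          · exact Set.mem_insert_of_mem _
              ⟨β, Finset.mem_coe.mpr (Finset.mem_erase.mpr ⟨hβα, hβ⟩), rfl⟩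
        have hg2 : g ∈ AddSubgroup.closure (insert (x α) (x '' ↑(F.erase α))) :=
          AddSubgroup.closure_mono himg2 hg
        obtain ⟨n, h', hh', rfl⟩ := mem_addClosure_insert' hg2
        have herase_lt : x '' ↑(F.erase α) ⊆ x '' Set.Iio α := by
          refine Set.image_mono ?_
          intro β hβ
          have hβe : β ∈ F.erase α := Finset.mem_coe.mp hβ
          exact lt_of_le_of_ne (F.le_max' β (Finset.mem_of_mem_erase hβe))
            (Finset.ne_of_mem_erase hβe)
        by_cases hn : n = 0
        · rw [hn, zero_smul, zero_add] at hgM ⊢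
          exact ih (F.erase α) (Finset.erase_ssubset (F.max'_mem hFne)) _ hh' i₀ hgM
        · exact absurd hgM
            ((spec α n hn h' (AddSubgroup.closure_mono herase_lt hh')).2 i₀ hi₀α)
  -- the subgroup
  set B : Set H := Set.range x with hBdef
  set G : AddSubgroup H := AddSubgroup.closure B with hGdef
  have hBκ : #B = κ := by rw [hBdef, Cardinal.mk_range_eq x hinj, hι]
  have hGκ : #G = κ := by
    refine le_antisymm ?_ ?_
    · refine (mk_addSubgroup_closure_le' B).trans ?_
      rw [hBκ]
      exact max_le le_rfl hκ.le
    · rw [← hBκ]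
      exact Cardinal.mk_le_mk_of_subset AddSubgroup.subset_closure
  -- smallness of meager subsets
  have hsmall : ∀ M : Set H, M ⊆ (G : Set H) → IsMeagre M → #M < κ := by
    intro M hMG hM
    obtain ⟨i₀, hMi₀⟩ := hMfn_cof M hM
    have hMsub : M ⊆ (AddSubgroup.closure (x '' Set.Iic i₀) : Set H) := by
      intro g hgM
      have hgG : g ∈ AddSubgroup.closure (Set.range x) := hMG hgM
      have hdir : Directed (· ≤ ·) (fun F : Finset ι => AddSubgroup.closure (x '' ↑F)) := by
        intro F F'
        exact ⟨F ∪ F',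
          AddSubgroup.closure_mono (Set.image_mono (by simp [Finset.subset_union_left])),
          AddSubgroup.closure_mono (Set.image_mono (by simp [Finset.subset_union_right]))⟩
      have hsup : g ∈ ⨆ F : Finset ι, AddSubgroup.closure (x '' ↑F) := by
        refine AddSubgroup.closure_le (⨆ F : Finset ι, AddSubgroup.closure (x '' ↑F)) |>.mpr
          ?_ hgG
        intro h hh
        obtain ⟨β, rfl⟩ := hh
        have : x β ∈ AddSubgroup.closure (x '' ↑({β} : Finset ι)) :=
          AddSubgroup.subset_closure (by simp)
        exact AddSubgroup.mem_iSup_of_directed hdir |>.mpr ⟨{β}, this⟩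
      obtain ⟨F, hgF⟩ := (AddSubgroup.mem_iSup_of_directed hdir).mp hsup
      exact hstruct F g hgF i₀ (hMi₀ hgM)
    have hIic : #(Set.Iic i₀) < κ := by
      have : Set.Iic i₀ = insert i₀ (Set.Iio i₀) := by
        ext β; simp [le_iff_lt_or_eq, or_comm]
      rw [this]
      refine (Cardinal.mk_insert_le).trans_lt ?_
      exact Cardinal.add_lt_of_lt hκ.le (Cardinal.mk_Iio_ord_toType i₀)
        (lt_trans Cardinal.one_lt_aleph0 hκ)
    calc #M ≤ #(AddSubgroup.closure (x '' Set.Iic i₀)) := by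
            exact_mod_cast Cardinal.mk_le_mk_of_subset hMsub
      _ ≤ max #(x '' Set.Iic i₀) ℵ₀ := mk_addSubgroup_closure_le' _
      _ < κ := max_lt (Cardinal.mk_image_le.trans_lt hIic) hκ
  refine ⟨G, hGκ, ⟨B, AddSubgroup.subset_closure, rfl, hBκ, ?_⟩, hsmall, ?_⟩
  · -- freeness
    intro F hFB f hsum a haF
    by_contra hfa
    have hfin : (x ⁻¹' ↑F).Finite := Set.Finite.preimage (Set.injOn_of_injective hinj)
      F.finite_toSet
    set A : Finset ι := hfin.toFinset with hAdef
    have hAimg : A.image x = F := by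
      ext h
      simp only [Finset.mem_image, hAdef, Set.Finite.mem_toFinset, Set.mem_preimage,
        Finset.mem_coe]
      constructor
      · rintro ⟨β, hβ, rfl⟩; exact hβ
      · intro hh
        obtain ⟨β, rfl⟩ := hFB hh
        exact ⟨β, hh, rfl⟩
    have hsum' : ∑ β ∈ A, f (x β) • x β = 0 := by
      rw [← hsum, ← hAimg, Finset.sum_image (fun _ _ _ _ h => hinj h)]
    set A' := A.filter (fun β => f (x β) ≠ 0) with hA'def
    have hA'ne : A'.Nonempty := by
      have haA : a ∈ A.image x := by rw [hAimg]; exact haF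
      obtain ⟨β₀, hβ₀A, hβ₀⟩ := Finset.mem_image.mp haA
      exact ⟨β₀, Finset.mem_filter.mpr ⟨hβ₀A, by rw [hβ₀]; exact hfa⟩⟩
    set α := A'.max' hA'ne with hαdef
    have hαA' : α ∈ A' := A'.max'_mem hA'ne
    have hαA : α ∈ A := (Finset.mem_filter.mp hαA').1
    have hfα : f (x α) ≠ 0 := (Finset.mem_filter.mp hαA').2
    have hsplit : f (x α) • x α + ∑ β ∈ A.erase α, f (x β) • x β = 0 :=
      (Finset.add_sum_erase A (fun β => f (x β) • x β) hαA).trans hsum'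
    have htail : ∑ β ∈ A.erase α, f (x β) • x β ∈
        AddSubgroup.closure (x '' Set.Iio α) := by
      refine AddSubgroup.sum_mem _ ?_
      intro β hβ
      by_cases hfβ : f (x β) = 0
      · rw [hfβ, zero_smul]; exact AddSubgroup.zero_mem _
      · have hβA' : β ∈ A' :=
          Finset.mem_filter.mpr ⟨Finset.mem_of_mem_erase hβ, hfβ⟩
        have hβlt : β < α :=
          lt_of_le_of_ne (A'.le_max' β hβA') (Finset.ne_of_mem_erase hβ)
        exact AddSubgroup.zsmul_mem _
          (AddSubgroup.subset_closure (Set.mem_image_of_mem x (Set.mem_Iio.mpr hβlt))) _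
    exact hne0 α (f (x α)) hfα _ htail hsplit
  · -- no meager generates
    intro M hMG hM hEq
    have h1 : #M < κ := hsmall M hMG hM
    have h2 : #(AddSubgroup.closure M) < κ :=
      (mk_addSubgroup_closure_le' M).trans_lt (max_lt h1 hκ)
    rw [hEq] at h2
    exact absurd hGκ (ne_of_lt h2)
end
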